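/- Fix r > 0 and assume there exists R > 0 such that ‖p_n(ω)‖ > r for all ω ∈ Ω whenever ‖n‖ > R. Then the truncated pattern map ω ↦ P(ω)[r] := ({p_n(ω) : n ∈ ℤ^d} ∩ closedBall(0, r)) ∪ sphere(0, r) is continuous from Ω to the space of nonempty compact subsets of ℝ^α endowed with the Hausdorff metric. -/

import Mathlib

/-!
Only the finitely many pattern points `p n` with `‖n‖ ≤ R` can enter the closed ball of radius
`r`, and each of them moves continuously with `ω`. If `p n ω` lies in the ball but the nearby
`p n ω₀` has left it, the radial projection of `p n ω₀` onto the sphere is a point of the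
truncated pattern at twice the distance at most; the sphere itself is common to all truncated
patterns. Hence truncated patterns of nearby points are close in the Hausdorff metric.
-/

/-- The set `𝒢_d = {±e_1, …, ±e_d}` of signed standard generators of `ℤ^d`. -/
def PR.gens (d : ℕ) : Set (Fin d → ℤ) :=
  {v | ∃ i : Fin d, v = Pi.single i 1 ∨ v = -Pi.single i 1}

open Metric Set Filter Topology TopologicalSpace

namespace PR

variable {E : Type*} [NormedAddCommGroup E] {ι : Type*} {S T : Set E} {r ε : ℝ}

/-- For `S = {p_n(ω)}` this is the paper's `P(ω)[r]`. -/
def truncation (S : Set E) (r : ℝ) : Set E :=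
  (S ∩ closedBall 0 r) ∪ sphere 0 r

theorem range_inter_closedBall_subset_image {p : ι → E} {F : Set ι}
    (hfar : ∀ i ∉ F, r < ‖p i‖) : range p ∩ closedBall 0 r ⊆ p '' F := by
  rintro _ ⟨⟨i, rfl⟩, hi⟩
  refine ⟨i, ?_, rfl⟩
  by_contra hiF
  exact (hfar i hiF).not_ge (mem_closedBall_zero_iff.mp hi)

theorem isCompact_truncation_range [ProperSpace E] {p : ι → E} {F : Set ι} (hF : F.Finite)
    (hfar : ∀ i ∉ F, r < ‖p i‖) : IsCompact (truncation (range p) r) :=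
  ((hF.image p).subset (range_inter_closedBall_subset_image hfar)).isCompact.union
    (isCompact_sphere 0 r)

variable [NormedSpace ℝ E]

theorem exists_mem_sphere_dist_le_two_mul {x y : E} (hx : ‖x‖ ≤ r) (hy : r < ‖y‖) :
    ∃ z ∈ sphere (0 : E) r, dist x z ≤ 2 * dist x y := by
  have hy0 : 0 < ‖y‖ := (norm_nonneg x).trans_lt (hx.trans_lt hy)
  have hratio : r / ‖y‖ ≤ 1 := (div_le_one hy0).mpr hy.le
  have hr : 0 ≤ r := (norm_nonneg x).trans hx
  refine ⟨(r / ‖y‖) • y, ?_, ?_⟩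
  · rw [mem_sphere_zero_iff_norm, norm_smul, Real.norm_of_nonneg (div_nonneg hr hy0.le),
      div_mul_cancel₀ _ hy0.ne']
  have hyz : dist y ((r / ‖y‖) • y) = ‖y‖ - r := by
    have hsub : y - (r / ‖y‖) • y = (1 - r / ‖y‖) • y := by rw [sub_smul, one_smul]
    rw [dist_eq_norm, hsub, norm_smul, Real.norm_of_nonneg (sub_nonneg.mpr hratio),
      sub_mul, one_mul, div_mul_cancel₀ _ hy0.ne']
  have hxy : ‖y‖ - ‖x‖ ≤ dist x y := by
    rw [dist_comm, dist_eq_norm]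
    exact norm_sub_norm_le y x
  calc dist x ((r / ‖y‖) • y) ≤ dist x y + dist y ((r / ‖y‖) • y) := dist_triangle _ _ _
    _ ≤ 2 * dist x y := by linarith

theorem exists_mem_truncation_dist_le (hε : 0 ≤ ε)
    (hST : ∀ x ∈ S ∩ closedBall 0 r, ∃ y ∈ T, dist x y ≤ ε) :
    ∀ x ∈ truncation S r, ∃ y ∈ truncation T r, dist x y ≤ 2 * ε := by
  rintro x (hxS | hx)
  · obtain ⟨y, hyT, hxy⟩ := hST x hxS
    have hxr : ‖x‖ ≤ r := mem_closedBall_zero_iff.mp hxS.2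
    rcases le_or_gt ‖y‖ r with hyr | hyr
    · exact ⟨y, Or.inl ⟨hyT, mem_closedBall_zero_iff.mpr hyr⟩, by linarith⟩
    · obtain ⟨z, hz, hxz⟩ := exists_mem_sphere_dist_le_two_mul hxr hyr
      exact ⟨z, Or.inr hz, hxz.trans (by linarith)⟩
  · exact ⟨x, Or.inr hx, by simpa using hε⟩

theorem hausdorffDist_truncation_le (hε : 0 ≤ ε)
    (hST : ∀ x ∈ S ∩ closedBall 0 r, ∃ y ∈ T, dist x y ≤ ε)
    (hTS : ∀ y ∈ T ∩ closedBall 0 r, ∃ x ∈ S, dist y x ≤ ε) :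
    hausdorffDist (truncation S r) (truncation T r) ≤ 2 * ε :=
  hausdorffDist_le_of_mem_dist (by positivity) (exists_mem_truncation_dist_le hε hST)
    (exists_mem_truncation_dist_le hε hTS)

theorem continuous_of_coe_eq_truncation_range {Ω : Type*} [TopologicalSpace Ω]
    {p : ι → Ω → E} (hp : ∀ i, Continuous (p i)) {F : Set ι} (hF : F.Finite)
    (hfar : ∀ i ∉ F, ∀ ω, r < ‖p i ω‖) {K : Ω → NonemptyCompacts E}
    (hK : ∀ ω, (K ω : Set E) = truncation (range fun i => p i ω) r) : Continuous K := by
  refine continuous_iff_continuousAt.mpr fun ω₀ => Metric.tendsto_nhds.mpr fun ε hε => ?_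
  have hnear : ∀ᶠ ω in 𝓝 ω₀, ∀ i ∈ F, dist (p i ω) (p i ω₀) ≤ ε / 4 :=
    (eventually_all_finite hF).mpr fun i _ =>
      (Metric.tendsto_nhds.mp ((hp i).tendsto ω₀) (ε / 4) (by positivity)).mono fun _ h => h.le
  filter_upwards [hnear] with ω hω
  have hclose : ∀ ω₁ ω₂, (∀ i ∈ F, dist (p i ω₁) (p i ω₂) ≤ ε / 4) →
      ∀ x ∈ (range fun i => p i ω₁) ∩ closedBall 0 r,
        ∃ y ∈ range fun i => p i ω₂, dist x y ≤ ε / 4 := by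
    intro ω₁ ω₂ h x hx
    obtain ⟨i, hi, rfl⟩ := range_inter_closedBall_subset_image (fun i hi => hfar i hi ω₁) hx
    exact ⟨p i ω₂, mem_range_self i, h i hi⟩
  have hdist := hausdorffDist_truncation_le (r := r) (by positivity) (hclose ω ω₀ hω)
    (hclose ω₀ ω fun i hi => by rw [dist_comm]; exact hω i hi)
  rw [NonemptyCompacts.dist_eq, hK, hK]
  linarith

end PR

theorem stmt_9_general (α d : ℕ)
    (Ω : Type*) [TopologicalSpace Ω]
    (p : (Fin d → ℤ) → Ω → EuclideanSpace ℝ (Fin α))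
    (hp0 : ∀ ω : Ω, p 0 ω = 0)
    (hpc : ∀ n : Fin d → ℤ, Continuous fun ω : Ω => p n ω)
    (r : ℝ) (hr : 0 < r)
    (R : ℝ)
    (hfar : ∀ (n : Fin d → ℤ) (ω : Ω), R < ‖n‖ → r < ‖p n ω‖) :
    ∃ K : Ω → TopologicalSpace.NonemptyCompacts (EuclideanSpace ℝ (Fin α)),
      (∀ ω : Ω, (K ω : Set (EuclideanSpace ℝ (Fin α)))
          = (Set.range (fun n : Fin d → ℤ => p n ω) ∩ Metric.closedBall 0 r)
              ∪ Metric.sphere 0 r) ∧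
      Continuous K := by
  have hF : (closedBall (0 : Fin d → ℤ) R).Finite := (isCompact_closedBall 0 R).finite_of_discrete
  have hfar_outside : ∀ n ∉ closedBall (0 : Fin d → ℤ) R, ∀ ω, r < ‖p n ω‖ := fun n hn ω =>
    hfar n ω (by simpa using hn)
  have hzero : ∀ ω, (0 : EuclideanSpace ℝ (Fin α)) ∈ PR.truncation (range fun n => p n ω) r :=
    fun ω => Or.inl ⟨⟨0, hp0 ω⟩, mem_closedBall_self hr.le⟩
  let K ω : NonemptyCompacts (EuclideanSpace ℝ (Fin α)) :=
    ⟨⟨_, PR.isCompact_truncation_range hF fun n hn => hfar_outside n hn ω⟩, ⟨0, hzero ω⟩⟩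
  exact ⟨K, fun ω => rfl, PR.continuous_of_coe_eq_truncation_range hpc hF hfar_outside fun ω => rfl⟩

/-- if `r > 0` and there is `R > 0` with `‖p_n(ω)‖ > r` for all `ω` whenever
`‖n‖ > R`, then the truncated pattern
`ω ↦ ({p_n(ω) : n ∈ ℤ^d} ∩ closedBall(0,r)) ∪ sphere(0,r)` is a nonempty compact set and
depends continuously on `ω` in the Hausdorff metric. -/
theorem stmt_9 (α d : ℕ) (hα : 1 ≤ α)
    (Ω : Type*) [TopologicalSpace Ω] [CompactSpace Ω] [T2Space Ω]
    (τ : (Fin d → ℤ) → Ω → Ω)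
    (hτc : ∀ n : Fin d → ℤ, Continuous (τ n))
    (hτadd : ∀ (n m : Fin d → ℤ) (ω : Ω), τ (n + m) ω = τ n (τ m ω))
    (hτ0 : ∀ ω : Ω, τ 0 ω = ω)
    (Γ : (Fin d → ℤ) → Ω → EuclideanSpace ℝ (Fin α))
    (hΓc : ∀ e ∈ PR.gens d, Continuous (Γ e))
    (hcons : ∀ e ∈ PR.gens d, ∀ e' ∈ PR.gens d, ∀ ω : Ω,
      Γ e' ω + Γ e (τ e' ω) = Γ e ω + Γ e' (τ e ω))
    (hneg : ∀ e ∈ PR.gens d, ∀ ω : Ω, Γ (-e) ω = -Γ e (τ (-e) ω))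
    (p : (Fin d → ℤ) → Ω → EuclideanSpace ℝ (Fin α))
    (hp0 : ∀ ω : Ω, p 0 ω = 0)
    (hprec : ∀ (n : Fin d → ℤ), ∀ e ∈ PR.gens d, ∀ ω : Ω,
      p (n + e) ω = p n ω + Γ e (τ n ω))
    (hpc : ∀ n : Fin d → ℤ, Continuous fun ω : Ω => p n ω)
    (r : ℝ) (hr : 0 < r)
    (R : ℝ) (hR : 0 < R)
    (hfar : ∀ (n : Fin d → ℤ) (ω : Ω), R < ‖n‖ → r < ‖p n ω‖) :
    ∃ K : Ω → TopologicalSpace.NonemptyCompacts (EuclideanSpace ℝ (Fin α)),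
      (∀ ω : Ω, (K ω : Set (EuclideanSpace ℝ (Fin α)))
          = (Set.range (fun n : Fin d → ℤ => p n ω) ∩ Metric.closedBall 0 r)
              ∪ Metric.sphere 0 r) ∧
      Continuous K :=
  stmt_9_general α d Ω p hp0 hpc r hr R hfar
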